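/- arXiv:1809.10958 — 6 statements merged into one kernel-verified Lean document; each statement's English description precedes it below -/
import Mathlib

section
/- For all t ∈ ℝ and k ∈ ℝ, the function d_k(t) := (a(b₊^{-1/2} t + x_k) − k)²/b₊ − t² satisfies the factorization d_k(t) = (1/b₊) · (∫_{x_k + t/√b₊}^{x_k} (b(s) + b₊) ds) · (∫_{x_k + t/√b₊}^{x_k} (b(s) − b₊) ds). -/
open MeasureTheory intervalIntegral

theorem stmt_3 (b : ℝ → ℝ) (bm bp : ℝ) (hb : Continuous b)
    (hbm : 0 < bm) (hlow : ∀ x, bm ≤ b x) (hup : ∀ x, b x ≤ bp)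
    (a ainv : ℝ → ℝ) (ha : ∀ x, a x = ∫ t in (0:ℝ)..x, b t)
    (hleft : ∀ x, ainv (a x) = x) (hright : ∀ k, a (ainv k) = k) :
    ∀ k t : ℝ,
      (a ((Real.sqrt bp)⁻¹ * t + ainv k) - k) ^ 2 / bp - t ^ 2 =
        (1 / bp) * (∫ s in (ainv k + t / Real.sqrt bp)..(ainv k), (b s + bp))
          * (∫ s in (ainv k + t / Real.sqrt bp)..(ainv k), (b s - bp)) := by
  intro k t
  have hbp : 0 < bp := lt_of_lt_of_le hbm ((hlow 0).trans (hup 0))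
  set s := Real.sqrt bp with hs
  have hs0 : 0 < s := Real.sqrt_pos.mpr hbp
  have hss : s * s = bp := Real.mul_self_sqrt hbp.le
  set X := ainv k with hX
  set u := X + t / s with hu
  have hib : ∀ p q : ℝ, IntervalIntegrable b volume p q := fun p q =>
    hb.intervalIntegrable p q
  have hA : (∫ x in u..X, b x) = a X - a u := by
    rw [ha, ha, ← intervalIntegral.integral_interval_sub_left (hib 0 X) (hib 0 u)]
  have h1 : (∫ x in u..X, (b x + bp)) = (a X - a u) + bp * (X - u) := by
    rw [intervalIntegral.integral_add (hib u X) intervalIntegrable_const,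
      intervalIntegral.integral_const, hA, smul_eq_mul, mul_comm]
  have h2 : (∫ x in u..X, (b x - bp)) = (a X - a u) - bp * (X - u) := by
    rw [intervalIntegral.integral_sub (hib u X) intervalIntegrable_const,
      intervalIntegral.integral_const, hA, smul_eq_mul, mul_comm]
  have hk : a X = k := hright k
  have harg : s⁻¹ * t + X = u := by rw [hu]; ring
  rw [harg, h1, h2, hk]
  have hXu : X - u = -(t / s) := by rw [hu]; ring
  rw [hXu, ← hss]
  field_simp
  ring
end

section
/- There exists a constant C > 0, independent of k and t, such that |d_k(t)| ≤ C t² for all t, k ∈ ℝ. -/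
/-! Since `0 < b ≤ b₊`, the primitive `a` is `b₊`-Lipschitz, so with `h = b₊^{-1/2} t` we get
`0 ≤ (a(x_k + h) − a(x_k))² / b₊ ≤ b₊ h² = t²`, hence `|d_k(t)| ≤ t²`: one can take `C = 1`. -/

open MeasureTheory intervalIntegral

open scoped Interval

theorem sq_intervalIntegral_le_of_abs_le {f : ℝ → ℝ} {a b C : ℝ}
    (hf : ∀ x ∈ Ι a b, |f x| ≤ C) : (∫ x in a..b, f x) ^ 2 ≤ C ^ 2 * (b - a) ^ 2 := by
  have hnorm : |∫ x in a..b, f x| ≤ C * |b - a| :=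
    norm_integral_le_of_norm_le_const fun x hx => (Real.norm_eq_abs _).trans_le (hf x hx)
  calc (∫ x in a..b, f x) ^ 2 = |∫ x in a..b, f x| ^ 2 := (sq_abs _).symm
    _ ≤ (C * |b - a|) ^ 2 := pow_le_pow_left₀ (abs_nonneg _) hnorm 2
    _ = C ^ 2 * (b - a) ^ 2 := by rw [mul_pow, sq_abs]

theorem stmt_4_general (b : ℝ → ℝ) (bm bp : ℝ) (hb : Continuous b)
    (hbm : 0 < bm) (hlow : ∀ x, bm ≤ b x) (hup : ∀ x, b x ≤ bp)
    (a ainv : ℝ → ℝ) (ha : ∀ x, a x = ∫ t in (0:ℝ)..x, b t)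
    (hright : ∀ k, a (ainv k) = k) :
    ∃ C > 0, ∀ k t : ℝ,
      |(a ((Real.sqrt bp)⁻¹ * t + ainv k) - k) ^ 2 / bp - t ^ 2| ≤ C * t ^ 2 := by
  have hbp : 0 < bp := hbm.trans_le ((hlow 0).trans (hup 0))
  have hb_abs : ∀ s, |b s| ≤ bp := fun s => abs_le.2 ⟨by linarith [hlow s], hup s⟩
  refine ⟨1, one_pos, fun k t => ?_⟩
  set h := (Real.sqrt bp)⁻¹ * t
  have hincr : a (h + ainv k) - k = ∫ s in ainv k..h + ainv k, b s := by
    nth_rewrite 2 [← hright k]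
    rw [ha, ha (ainv k),
      integral_interval_sub_left (hb.intervalIntegrable _ _) (hb.intervalIntegrable _ _)]
  have hsq : (a (h + ainv k) - k) ^ 2 ≤ bp * t ^ 2 :=
    calc (a (h + ainv k) - k) ^ 2 ≤ bp ^ 2 * h ^ 2 := by
          simpa [hincr] using
            sq_intervalIntegral_le_of_abs_le (a := ainv k) (b := h + ainv k) fun s _ => hb_abs s
      _ = bp * t ^ 2 := by
          rw [mul_pow, inv_pow, Real.sq_sqrt hbp.le]
          field_simp
  rw [one_mul]
  exact abs_sub_le_of_nonneg_of_le (by positivity)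
    ((div_le_iff₀ hbp).2 (by linarith)) (sq_nonneg t) le_rfl

theorem stmt_4 (b : ℝ → ℝ) (bm bp : ℝ) (hb : Continuous b)
    (hbm : 0 < bm) (hlow : ∀ x, bm ≤ b x) (hup : ∀ x, b x ≤ bp)
    (a ainv : ℝ → ℝ) (ha : ∀ x, a x = ∫ t in (0:ℝ)..x, b t)
    (hleft : ∀ x, ainv (a x) = x) (hright : ∀ k, a (ainv k) = k) :
    ∃ C > 0, ∀ k t : ℝ,
      |(a ((Real.sqrt bp)⁻¹ * t + ainv k) - k) ^ 2 / bp - t ^ 2| ≤ C * t ^ 2 :=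
  stmt_4_general b bm bp hb hbm hlow hup a ainv ha hright
end

section
/- If b is increasing with limit b₊ at +∞, then for every fixed t ∈ ℝ, d_k(t) → 0 as k → +∞. -/
open MeasureTheory intervalIntegral Filter

theorem stmt_5 (b : ℝ → ℝ) (bm bp : ℝ) (hb : Continuous b)
    (hbm : 0 < bm) (hlow : ∀ x, bm ≤ b x) (hup : ∀ x, b x ≤ bp)
    (hinc : Monotone b) (hlim : Tendsto b atTop (nhds bp))
    (a ainv : ℝ → ℝ) (ha : ∀ x, a x = ∫ t in (0:ℝ)..x, b t)
    (hleft : ∀ x, ainv (a x) = x) (hright : ∀ k, a (ainv k) = k) :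
    ∀ t : ℝ,
      Tendsto (fun k : ℝ => (a ((Real.sqrt bp)⁻¹ * t + ainv k) - k) ^ 2 / bp - t ^ 2)
        atTop (nhds 0) := by
  intro t
  set s : ℝ := (Real.sqrt bp)⁻¹ * t with hs
  have hbp : 0 < bp := lt_of_lt_of_le hbm (le_trans (hlow 0) (hup 0))
  have hintg : ∀ u v : ℝ, IntervalIntegrable b volume u v :=
    fun u v => hb.intervalIntegrable u v
  have hdiff : ∀ x y : ℝ, a y - a x = ∫ u in x..y, b u := by
    intro x y
    rw [ha, ha, ← intervalIntegral.integral_interval_sub_left (hintg 0 y) (hintg 0 x)]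
  -- a is strictly monotone
  have hamono : StrictMono a := by
    intro x y hxy
    have h2 : bm * (y - x) ≤ ∫ u in x..y, b u := by
      have := intervalIntegral.integral_mono_on (μ := volume) hxy.le
        (_root_.intervalIntegrable_const (c := bm)) (hintg x y) (fun u _ => hlow u)
      simp only [intervalIntegral.integral_const, smul_eq_mul] at this
      linarith
    have : 0 < a y - a x := by
      rw [hdiff]
      exact lt_of_lt_of_le (by nlinarith) h2
    linarith
  -- ainv tends to atTop
  have hainv : Tendsto ainv atTop atTop := by
    rw [tendsto_atTop_atTop]
    intro M
    refine ⟨a M, fun k hk => ?_⟩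
    have : a M ≤ a (ainv k) := by rw [hright]; exact hk
    exact hamono.le_iff_le.mp this
  -- key limit
  have key : Tendsto (fun k => a (s + ainv k) - k) atTop (nhds (bp * s)) := by
    have hrepr : ∀ k : ℝ, a (s + ainv k) - k - bp * s
        = ∫ u in (ainv k)..(s + ainv k), (b u - bp) := by
      intro k
      rw [intervalIntegral.integral_sub (hintg _ _) (_root_.intervalIntegrable_const),
        intervalIntegral.integral_const, ← hdiff (ainv k) (s + ainv k), hright,
        smul_eq_mul]
      ring
    have hbound : ∀ k : ℝ, |a (s + ainv k) - k - bp * s|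
        ≤ (bp - b (ainv k - |s|)) * |s| := by
      intro k
      rw [hrepr k]
      have hC := intervalIntegral.norm_integral_le_of_norm_le_const
        (f := fun u => b u - bp) (a := ainv k) (b := s + ainv k)
        (C := bp - b (ainv k - |s|)) ?_
      · simpa [abs_sub_comm (s + ainv k) (ainv k), add_sub_cancel_right,
          mul_comm] using hC
      · intro u hu
        have hum : ainv k - |s| ≤ u := by
          rcases Set.mem_uIoc.mp hu with ⟨h1, _⟩ | ⟨h1, _⟩
          · have := abs_nonneg s; linarith
          · have := neg_abs_le s; linarith
        have h1 : b u ≤ bp := hup u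
        have h2 : b (ainv k - |s|) ≤ b u := hinc hum
        rw [Real.norm_eq_abs, abs_sub_comm, abs_of_nonneg (by linarith)]
        linarith
    have hg : Tendsto (fun k => (bp - b (ainv k - |s|)) * |s|) atTop (nhds 0) := by
      have h1 : Tendsto (fun k => ainv k - |s|) atTop atTop :=
        tendsto_atTop_add_const_right _ _ hainv
      have h2 : Tendsto (fun k => b (ainv k - |s|)) atTop (nhds bp) := hlim.comp h1
      have := ((tendsto_const_nhds (x := bp)).sub h2).mul_const |s|
      simpa using this
    have hz : Tendsto (fun k => a (s + ainv k) - k - bp * s) atTop (nhds 0) := by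
      apply squeeze_zero_norm (fun k => ?_) hg
      simpa [Real.norm_eq_abs] using hbound k
    have := hz.add_const (bp * s)
    simpa using this
  have hfinal := ((key.pow 2).div_const bp).sub_const (t ^ 2)
  have heq : (bp * s) ^ 2 / bp - t ^ 2 = 0 := by
    have hsq : Real.sqrt bp ^ 2 = bp := Real.sq_sqrt hbp.le
    have hsne : Real.sqrt bp ≠ 0 := by positivity
    rw [hs]
    field_simp
    nlinarith [hsq]
  rw [heq] at hfinal
  exact hfinal
end

section
/- Suppose b is C^p on (−∞, x∞] with b^{(j)}(x∞⁻) = 0 for 1 ≤ j ≤ p−1 and b^{(p)}(x∞⁻) ≠ 0, and b(x) = b₊ for x ≥ x∞. Then d_k is (p+1)-times differentiable at t_k from the left, d_k^{(j)}(t_k) = 0 for j = 1, …, p, and d_k^{(p+1)}(t_k) = −2(k − a∞) b₊^{−(p+3)/2} b^{(p)}(x∞⁻). -/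
/-!
Put `y = x_k + t / √b₊`. Then `d_k(t) = g(y) h(y)` with `g(y) = a(y) - a(x∞) - b₊ (y - x∞)`, the
remainder of the tangent line of `a` at `x∞`, and `h(y) = (a(y) - k + b₊ (y - x_k)) / b₊`; the
factorization rests on `k - a(x∞) = b₊ (x_k - x∞)`, which holds because `b = b₊` on `[x∞, x_k]`.
Since `g' = b - b₊`, `g` vanishes to order `p` at `x∞` and `g^(p+1)(x∞) = b^(p)(x∞⁻)`, so by
Leibniz's rule the derivatives of `g h` of order `≤ p` vanish at `x∞` and the next one is
`b^(p)(x∞⁻) h(x∞) = -2 (k - a∞) b^(p)(x∞⁻) / b₊`. The change of variables adds `b₊^(-(p+1)/2)`.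
-/

open MeasureTheory intervalIntegral Set

section IteratedDerivWithin

variable {𝕜 : Type*} [NontriviallyNormedField 𝕜] {F : Type*} [NormedAddCommGroup F]
  [NormedSpace 𝕜 F] {s t : Set 𝕜} {x x₀ : 𝕜} {a b : 𝕜 → F}

theorem iteratedDerivWithin_comp_mul_add {n : ℕ} {f : 𝕜 → F} (hf : ContDiffOn 𝕜 n f t)
    (hs : UniqueDiffOn 𝕜 s) (ht : UniqueDiffOn 𝕜 t) {c d : 𝕜}
    (hst : MapsTo (fun x => c * x + d) s t) (hx : x ∈ s) :
    iteratedDerivWithin n (fun x => f (c * x + d)) s x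
      = c ^ n • iteratedDerivWithin n f t (c * x + d) := by
  induction n generalizing x with
  | zero => simp
  | succ n ih =>
    have hEq : s.EqOn (iteratedDerivWithin n (fun x => f (c * x + d)) s)
        (fun x => c ^ n • iteratedDerivWithin n f t (c * x + d)) :=
      fun y hy => ih hf.of_succ hy
    have hf' : HasDerivWithinAt (iteratedDerivWithin n f t)
        (iteratedDerivWithin (n + 1) f t (c * x + d)) t (c * x + d) := by
      rw [iteratedDerivWithin_succ]
      exact (hf.differentiableOn_iteratedDerivWithin (Nat.cast_lt.mpr n.lt_succ_self) ht _
        (hst hx)).hasDerivWithinAt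
    have haff : HasDerivWithinAt (fun x => c * x + d) c s x := by
      simpa using ((hasDerivWithinAt_id x s).const_mul c).add_const d
    have hcomp : HasDerivWithinAt (fun x => c ^ n • iteratedDerivWithin n f t (c * x + d))
        (c ^ n • c • iteratedDerivWithin (n + 1) f t (c * x + d)) s x :=
      (hf'.scomp x haff hst).const_smul (c ^ n)
    rw [iteratedDerivWithin_succ, derivWithin_congr hEq (hEq hx), hcomp.derivWithin (hs x hx),
      smul_smul, pow_succ]

theorem contDiffOn_succ_of_hasDerivAt {n : ℕ} (hs : UniqueDiffOn 𝕜 s)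
    (hab : ∀ x, HasDerivAt a (b x) x) (hb : ContDiffOn 𝕜 n b s) :
    ContDiffOn 𝕜 (n + 1) a s := by
  rw [contDiffOn_succ_iff_derivWithin hs]
  refine ⟨fun x _ => (hab x).differentiableAt.differentiableWithinAt, by simp, ?_⟩
  exact hb.congr fun x hx => (hab x).hasDerivWithinAt.derivWithin (hs x hx)

theorem hasDerivAt_sub_tangent (hab : ∀ x, HasDerivAt a (b x) x) (x : 𝕜) :
    HasDerivAt (fun y => a y - a x₀ - (y - x₀) • b x₀) (b x - b x₀) x := by
  simpa using
    ((hab x).sub_const (a x₀)).fun_sub (((hasDerivAt_id x).sub_const x₀).smul_const (b x₀))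

theorem iteratedDerivWithin_sub_tangent_succ (hs : UniqueDiffOn 𝕜 s)
    (hab : ∀ x, HasDerivAt a (b x) x) {n : ℕ} (hn : 0 < n) {x : 𝕜} (hx : x ∈ s) :
    iteratedDerivWithin (n + 1) (fun y => a y - a x₀ - (y - x₀) • b x₀) s x
      = iteratedDerivWithin n b s x := by
  have hderiv : s.EqOn (derivWithin (fun y => a y - a x₀ - (y - x₀) • b x₀) s)
      (fun y => -b x₀ + b y) := fun y hy => by
    rw [(hasDerivAt_sub_tangent hab y).hasDerivWithinAt.derivWithin (hs y hy), sub_eq_neg_add]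
  rw [iteratedDerivWithin_succ', iteratedDerivWithin_congr hderiv hx,
    iteratedDerivWithin_const_add hn]

theorem iteratedDerivWithin_sub_tangent_eq_zero (hs : UniqueDiffOn 𝕜 s) (hx₀ : x₀ ∈ s)
    (hab : ∀ x, HasDerivAt a (b x) x) {n : ℕ}
    (hvanish : ∀ j, 1 ≤ j → j < n → iteratedDerivWithin j b s x₀ = 0) {i : ℕ} (hi : i ≤ n) :
    iteratedDerivWithin i (fun y => a y - a x₀ - (y - x₀) • b x₀) s x₀ = 0 := by
  match i with
  | 0 => simp
  | 1 =>
    rw [iteratedDerivWithin_one,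
      (hasDerivAt_sub_tangent hab x₀).hasDerivWithinAt.derivWithin (hs x₀ hx₀), sub_self]
  | j + 2 =>
    rw [iteratedDerivWithin_sub_tangent_succ hs hab (by omega) hx₀]
    exact hvanish (j + 1) (by omega) (by omega)

variable {𝔸 : Type*} [NormedRing 𝔸] [NormedAlgebra 𝕜 𝔸] {f g : 𝕜 → 𝔸}

theorem iteratedDerivWithin_mul_eq_zero {n : ℕ} (hs : UniqueDiffOn 𝕜 s) (hx : x ∈ s)
    (hf : ContDiffWithinAt 𝕜 n f s x) (hg : ContDiffWithinAt 𝕜 n g s x)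
    (hvanish : ∀ i ≤ n, iteratedDerivWithin i f s x = 0) :
    iteratedDerivWithin n (f * g) s x = 0 := by
  rw [iteratedDerivWithin_mul hx hs hf hg]
  exact Finset.sum_eq_zero fun i hi => by
    rw [hvanish i (Finset.mem_range_succ_iff.1 hi), mul_zero, zero_mul]

theorem iteratedDerivWithin_succ_mul_eq {n : ℕ} (hs : UniqueDiffOn 𝕜 s) (hx : x ∈ s)
    (hf : ContDiffWithinAt 𝕜 (n + 1) f s x) (hg : ContDiffWithinAt 𝕜 (n + 1) g s x)
    (hvanish : ∀ i ≤ n, iteratedDerivWithin i f s x = 0) :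
    iteratedDerivWithin (n + 1) (f * g) s x = iteratedDerivWithin (n + 1) f s x * g x := by
  rw [iteratedDerivWithin_mul hx hs hf hg, Finset.sum_range_succ, Finset.sum_eq_zero]
  · simp
  · intro i hi
    rw [hvanish i (Finset.mem_range_succ_iff.1 hi), mul_zero, zero_mul]

theorem iteratedDerivWithin_comp_mul_add_mul {n : ℕ} (hf : ContDiffOn 𝕜 (n + 1) f t)
    (hg : ContDiffOn 𝕜 (n + 1) g t) (hs : UniqueDiffOn 𝕜 s) (ht : UniqueDiffOn 𝕜 t) {c d : 𝕜}
    (hst : MapsTo (fun x => c * x + d) s t) (hx : x ∈ s) (hx₀ : c * x + d = x₀)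
    (hvanish : ∀ i ≤ n, iteratedDerivWithin i f t x₀ = 0) :
    (∀ j ≤ n, iteratedDerivWithin j (fun x => (f * g) (c * x + d)) s x = 0) ∧
      iteratedDerivWithin (n + 1) (fun x => (f * g) (c * x + d)) s x
        = c ^ (n + 1) • (iteratedDerivWithin (n + 1) f t x₀ * g x₀) := by
  have hx₀t : x₀ ∈ t := hx₀ ▸ hst hx
  have hcomp : ∀ j ≤ n + 1, iteratedDerivWithin j (fun x => (f * g) (c * x + d)) s x
      = c ^ j • iteratedDerivWithin j (f * g) t x₀ := fun j hj => by
    rw [← hx₀]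
    exact iteratedDerivWithin_comp_mul_add ((hf.mul hg).of_le (by exact_mod_cast hj)) hs ht hst hx
  refine ⟨fun j hj => ?_, ?_⟩
  · have hjn : (j : WithTop ℕ∞) ≤ n + 1 := by exact_mod_cast hj.trans n.le_succ
    rw [hcomp j (hj.trans n.le_succ), iteratedDerivWithin_mul_eq_zero ht hx₀t
      ((hf.of_le hjn) _ hx₀t) ((hg.of_le hjn) _ hx₀t) fun i hi => hvanish i (hi.trans hj),
      smul_zero]
  · rw [hcomp (n + 1) le_rfl, iteratedDerivWithin_succ_mul_eq ht hx₀t (hf _ hx₀t) (hg _ hx₀t)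
      hvanish]

end IteratedDerivWithin

theorem sub_eq_mul_sub_of_hasDerivAt_of_pos {a b : ℝ → ℝ} {x₀ x : ℝ}
    (hab : ∀ y, HasDerivAt a (b y) y) (hpos : ∀ y, 0 < b y) (hflat : ∀ y, x₀ ≤ y → b y = b x₀)
    (hx : a x₀ < a x) : a x - a x₀ = b x₀ * (x - x₀) := by
  have hle : x₀ ≤ x :=
    ((strictMono_of_deriv_pos fun y => (hab y).deriv ▸ hpos y).lt_iff_lt.1 hx).le
  have hderiv : ∀ y ∈ uIcc x₀ x, HasDerivAt (fun y => a y - b x₀ * y) 0 y := fun y hy => by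
    rw [uIcc_of_le hle] at hy
    simpa [hflat y hy.1] using (hab y).fun_sub ((hasDerivAt_id y).const_mul (b x₀))
  have := integral_eq_sub_of_hasDerivAt hderiv intervalIntegrable_const
  simp only [intervalIntegral.integral_zero] at this
  linarith

theorem mapsTo_mul_add_Iic {c : ℝ} (hc : 0 ≤ c) (d T : ℝ) :
    MapsTo (fun t => c * t + d) (Iic T) (Iic (c * T + d)) := fun t ht => by
  simp only [mem_Iic] at ht ⊢
  gcongr

theorem inv_mul_div_add_eq {a : ℝ → ℝ} {m sq k x₀ xk : ℝ} (hsq : sq ^ 2 = m) (hsq0 : sq ≠ 0)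
    (hjump : k - a x₀ = m * (xk - x₀)) : sq⁻¹ * ((a x₀ - k) / sq) + xk = x₀ := by
  subst hsq
  field_simp
  linear_combination -hjump

theorem sq_div_sub_sq_eq_mul {a : ℝ → ℝ} {m sq k x₀ xk : ℝ} (hsq : sq ^ 2 = m) (hsq0 : sq ≠ 0)
    (hjump : k - a x₀ = m * (xk - x₀)) :
    (fun t => (a (sq⁻¹ * t + xk) - k) ^ 2 / m - t ^ 2)
      = fun t => ((fun y => a y - a x₀ - (y - x₀) • m) * fun y => (a y - k + m * (y - xk)) / m)
          (sq⁻¹ * t + xk) := by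
  funext t
  simp only [Pi.mul_apply, smul_eq_mul]
  generalize a (sq⁻¹ * t + xk) = A
  subst hsq
  field_simp
  linear_combination -(A - k + sq * t) * hjump

theorem stmt_8_general (b : ℝ → ℝ) (bm bp xinf : ℝ) (p : ℕ) (hp : 1 ≤ p)
    (hb : Continuous b) (hbm : 0 < bm) (hlow : ∀ x, bm ≤ b x)
    (hflat : ∀ x, xinf ≤ x → b x = bp)
    (hreg : ContDiffOn ℝ p b (Iic xinf))
    (hvanish : ∀ j : ℕ, 1 ≤ j → j ≤ p - 1 → iteratedDerivWithin j b (Iic xinf) xinf = 0)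
    (a ainv : ℝ → ℝ) (ha : ∀ x, a x = ∫ t in (0:ℝ)..x, b t)
    (hright : ∀ k, a (ainv k) = k) :
    ∀ k : ℝ, a xinf < k →
      (ContDiffWithinAt ℝ (p + 1)
          (fun t => (a ((Real.sqrt bp)⁻¹ * t + ainv k) - k) ^ 2 / bp - t ^ 2)
          (Iic ((a xinf - k) / Real.sqrt bp)) ((a xinf - k) / Real.sqrt bp)) ∧
      (∀ j : ℕ, 1 ≤ j → j ≤ p →
        iteratedDerivWithin j
          (fun t => (a ((Real.sqrt bp)⁻¹ * t + ainv k) - k) ^ 2 / bp - t ^ 2)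
          (Iic ((a xinf - k) / Real.sqrt bp)) ((a xinf - k) / Real.sqrt bp) = 0) ∧
      iteratedDerivWithin (p + 1)
          (fun t => (a ((Real.sqrt bp)⁻¹ * t + ainv k) - k) ^ 2 / bp - t ^ 2)
          (Iic ((a xinf - k) / Real.sqrt bp)) ((a xinf - k) / Real.sqrt bp)
        = -2 * (k - a xinf) * ((Real.sqrt bp) ^ (p + 3))⁻¹
            * iteratedDerivWithin p b (Iic xinf) xinf := by
  intro k hk
  have hab : ∀ x, HasDerivAt a (b x) x := fun x => by
    rw [funext ha]
    exact (hb.integral_hasStrictDerivAt 0 x).hasDerivAt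
  obtain rfl : b xinf = bp := hflat xinf le_rfl
  have hbp : 0 < b xinf := hbm.trans_le (hlow xinf)
  have hjump := sub_eq_mul_sub_of_hasDerivAt_of_pos (x := ainv k) hab
    (fun x => hbm.trans_le (hlow x)) hflat (by rwa [hright])
  rw [hright] at hjump
  set sq := √(b xinf)
  have hsq : sq ^ 2 = b xinf := Real.sq_sqrt hbp.le
  have hsq0 : 0 < sq := Real.sqrt_pos.2 hbp
  have hT := inv_mul_div_add_eq hsq hsq0.ne' hjump
  have hs := uniqueDiffOn_Iic xinf
  have haC := contDiffOn_succ_of_hasDerivAt hs hab hreg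
  have hmaps := hT ▸ mapsTo_mul_add_Iic (inv_pos.2 hsq0).le (ainv k) ((a xinf - k) / sq)
  have hgC : ContDiffOn ℝ (p + 1) (fun y => a y - a xinf - (y - xinf) • b xinf) (Iic xinf) :=
    (haC.sub contDiffOn_const).sub (by fun_prop)
  have hhC : ContDiffOn ℝ (p + 1) (fun y => (a y - k + b xinf * (y - ainv k)) / b xinf)
      (Iic xinf) := ((haC.sub contDiffOn_const).add (by fun_prop)).div_const _
  obtain ⟨hlower, htop⟩ := iteratedDerivWithin_comp_mul_add_mul hgC hhC (uniqueDiffOn_Iic _) hs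
    hmaps self_mem_Iic hT fun i hi => iteratedDerivWithin_sub_tangent_eq_zero hs self_mem_Iic hab
      (fun j h1 h2 => hvanish j h1 (by omega)) hi
  rw [sq_div_sub_sq_eq_mul hsq hsq0.ne' hjump]
  refine ⟨(hgC.mul hhC).comp (by fun_prop) hmaps _ self_mem_Iic, fun j _ hj => hlower j hj, ?_⟩
  have hh : a xinf - k + b xinf * (xinf - ainv k) = -2 * (k - a xinf) := by
    linear_combination hjump
  rw [htop, iteratedDerivWithin_sub_tangent_succ hs hab hp self_mem_Iic, hh, ← hsq, smul_eq_mul,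
    inv_pow]
  field_simp
  ring

theorem stmt_8 (b : ℝ → ℝ) (bm bp xinf : ℝ) (p : ℕ) (hp : 1 ≤ p)
    (hb : Continuous b) (hbm : 0 < bm) (hlow : ∀ x, bm ≤ b x) (hup : ∀ x, b x ≤ bp)
    (hflat : ∀ x, xinf ≤ x → b x = bp)
    (hreg : ContDiffOn ℝ p b (Iic xinf))
    (hvanish : ∀ j : ℕ, 1 ≤ j → j ≤ p - 1 → iteratedDerivWithin j b (Iic xinf) xinf = 0)
    (hnonzero : iteratedDerivWithin p b (Iic xinf) xinf ≠ 0)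
    (a ainv : ℝ → ℝ) (ha : ∀ x, a x = ∫ t in (0:ℝ)..x, b t)
    (hleft : ∀ x, ainv (a x) = x) (hright : ∀ k, a (ainv k) = k) :
    ∀ k : ℝ, a xinf < k →
      (ContDiffWithinAt ℝ (p + 1)
          (fun t => (a ((Real.sqrt bp)⁻¹ * t + ainv k) - k) ^ 2 / bp - t ^ 2)
          (Iic ((a xinf - k) / Real.sqrt bp)) ((a xinf - k) / Real.sqrt bp)) ∧
      (∀ j : ℕ, 1 ≤ j → j ≤ p →
        iteratedDerivWithin j
          (fun t => (a ((Real.sqrt bp)⁻¹ * t + ainv k) - k) ^ 2 / bp - t ^ 2)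
          (Iic ((a xinf - k) / Real.sqrt bp)) ((a xinf - k) / Real.sqrt bp) = 0) ∧
      iteratedDerivWithin (p + 1)
          (fun t => (a ((Real.sqrt bp)⁻¹ * t + ainv k) - k) ^ 2 / bp - t ^ 2)
          (Iic ((a xinf - k) / Real.sqrt bp)) ((a xinf - k) / Real.sqrt bp)
        = -2 * (k - a xinf) * ((Real.sqrt bp) ^ (p + 3))⁻¹
            * iteratedDerivWithin p b (Iic xinf) xinf :=
  stmt_8_general b bm bp xinf p hp hb hbm hlow hflat hreg hvanish a ainv ha hright
end

section
/- Let f : ℝ → ℝ be C^{p+2} on (−∞, T] with f(T) = f'(T) = ⋯ = f^{(p)}(T) = 0, f^{(p+1)}(T) ≠ 0, and |f^{(p+2)}(t)| ≤ C|t| for all t ≤ T. Then as T → −∞ (with f = f_T possibly depending on T, uniformly satisfying the derivative bound), ∫_{−∞}^{T} e^{−t²} f(t) dt ∼ −e^{−T²} f^{(p+1)}(T)/(2T)^{p+2}, provided |f^{(p+1)}(T)| ≥ c|T| for some c > 0. -/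
/-!
Substituting `t = T - s` and writing `a = -2T > 0` turns the integral into
`e^{-T²} ∫₀^∞ e^{-as} e^{-s²} f(T - s) ds`. Taylor's theorem at `T` (only the
`(p+1)`-st derivative survives) gives `f(T - s) = A (-s)^{p+1}/(p+1)! + O((|T| + s) s^{p+2})`
with `A = f^{(p+1)}(T)`, and `e^{-s²} = 1 + O(s²)`. Against `e^{-as}` every extra power of `s`
costs a factor `1/a`, so the integral is `(-1)^{p+1} A / a^{p+2}` up to a relative error
`O(C/|A| + 1/a²)`, which tends to `0` because `|A| ≥ c|T|`.
-/

open MeasureTheory Filter Set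

open Real Nat Topology

theorem iteratedDerivWithin_subset {𝕜 F : Type*} [NontriviallyNormedField 𝕜]
    [NormedAddCommGroup F] [NormedSpace 𝕜 F] {f : 𝕜 → F} {s t : Set 𝕜} {n m : ℕ} {x : 𝕜}
    (st : s ⊆ t) (hs : UniqueDiffOn 𝕜 s) (ht : UniqueDiffOn 𝕜 t) (hf : ContDiffOn 𝕜 n f t)
    (hm : m ≤ n) (hx : x ∈ s) : iteratedDerivWithin m f s x = iteratedDerivWithin m f t x := by
  simp only [iteratedDerivWithin_eq_iteratedFDerivWithin,
    iteratedFDerivWithin_subset st hs ht (hf.of_le (by exact_mod_cast hm)) hx]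

theorem abs_sub_taylor_le_of_iteratedDerivWithin_Iic_eq_zero {f : ℝ → ℝ} {n : ℕ} {T t M : ℝ}
    (hf : ContDiffOn ℝ (n + 1 : ℕ) f (Iic T))
    (hvan : ∀ j < n, iteratedDerivWithin j f (Iic T) T = 0) (ht : t ≤ T)
    (hM : ∀ x ∈ Icc t T, |iteratedDerivWithin (n + 1) f (Iic T) x| ≤ M) :
    |f t - iteratedDerivWithin n f (Iic T) T * (t - T) ^ n / n !| ≤
      M * (T - t) ^ (n + 1) / (n + 1)! := by
  rcases ht.eq_or_lt with rfl | ht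
  · cases n with
    | zero => simp
    | succ n => simpa using hvan 0 n.succ_pos
  have hI : uIcc T t = Icc t T := uIcc_of_ge ht.le
  have hsub : Icc t T ⊆ Iic T := Icc_subset_Iic_self
  have hu : UniqueDiffOn ℝ (Icc t T) := uniqueDiffOn_Icc ht
  have hfI : ContDiffOn ℝ (n + 1 : ℕ) f (Icc t T) := hf.mono hsub
  have hderiv {m : ℕ} (hm : m ≤ n + 1) {x : ℝ} (hx : x ∈ Icc t T) :
      iteratedDerivWithin m f (Icc t T) x = iteratedDerivWithin m f (Iic T) x :=
    iteratedDerivWithin_subset hsub hu (uniqueDiffOn_Iic T) hf hm hx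
  have hT : T ∈ Icc t T := right_mem_Icc.2 ht.le
  have hlag := taylor_mean_remainder_lagrange (f := f) (n := n) ht.ne'
  rw [hI, uIoo_of_ge ht.le] at hlag
  obtain ⟨x, hx, hlag⟩ := hlag (hfI.of_le (by exact_mod_cast n.le_succ))
    ((hfI.differentiableOn_iteratedDerivWithin (by exact_mod_cast n.lt_succ_self) hu).mono
      Ioo_subset_Icc_self)
  have htaylor : taylorWithinEval f n (Icc t T) T t =
      iteratedDerivWithin n f (Iic T) T * (t - T) ^ n / n ! := by
    rw [taylor_within_apply, Finset.sum_range_succ, Finset.sum_eq_zero, hderiv n.le_succ hT]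
    · simp only [smul_eq_mul]; ring
    · intro j hj
      rw [hderiv (by grind) hT, hvan j (Finset.mem_range.1 hj), smul_zero]
  rw [← htaylor, hlag, hderiv le_rfl (Ioo_subset_Icc_self hx), abs_div, abs_mul, abs_pow,
    abs_sub_comm t T, abs_of_nonneg (sub_nonneg.2 ht.le), Nat.abs_cast]
  gcongr
  exact hM x (Ioo_subset_Icc_self hx)

theorem integral_Iic_eq_integral_Ioi_comp_sub {E : Type*} [NormedAddCommGroup E]
    [NormedSpace ℝ E] (T : ℝ) (f : ℝ → E) :
    ∫ t in Iic T, f t = ∫ s in Ioi 0, f (T - s) := by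
  have he : MeasurableEmbedding fun s : ℝ => T - s :=
    (Homeomorph.subLeft T).isClosedEmbedding.measurableEmbedding
  rw [← (Measure.measurePreserving_sub_left volume T).setIntegral_preimage_emb he f (Iic T),
    ← integral_Ici_eq_integral_Ioi]
  congr 2
  ext s
  simp

theorem integral_pow_mul_exp_neg_mul_Ioi (m : ℕ) {a : ℝ} (ha : 0 < a) :
    ∫ s in Ioi (0:ℝ), s ^ m * exp (-(a * s)) = m ! / a ^ (m + 1) := by
  have h := integral_rpow_mul_exp_neg_mul_Ioi (a := m + 1) (r := a) (by positivity) ha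
  simp only [add_sub_cancel_right, rpow_natCast, Gamma_nat_eq_factorial] at h
  rw [h, ← Nat.cast_succ, rpow_natCast, one_div, inv_pow, div_eq_inv_mul]

theorem integrableOn_pow_mul_exp_neg_mul_Ioi (m : ℕ) {a : ℝ} (ha : 0 < a) :
    IntegrableOn (fun s => s ^ m * exp (-(a * s))) (Ioi 0) := by
  have h := integrableOn_rpow_mul_exp_neg_mul_rpow (p := 1) (s := m)
    (by linarith [m.cast_nonneg (α := ℝ)]) one_pos ha
  simpa [rpow_natCast] using h

theorem abs_integral_exp_neg_mul_sub_le {u : ℝ → ℝ} {a B K₁ K₂ : ℝ} {n : ℕ} (ha : 0 < a)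
    (hu : AEStronglyMeasurable u (volume.restrict (Ioi 0)))
    (hbound : ∀ s > 0, |u s - B * s ^ n| ≤ K₁ * s ^ (n + 1) + K₂ * s ^ (n + 2)) :
    |(∫ s in Ioi 0, exp (-(a * s)) * u s) - B * n ! / a ^ (n + 1)| ≤
      K₁ * (n + 1)! / a ^ (n + 2) + K₂ * (n + 2)! / a ^ (n + 3) := by
  have hI := fun m => integrableOn_pow_mul_exp_neg_mul_Ioi m ha
  have hmajor : IntegrableOn
      (fun s => K₁ * (s ^ (n + 1) * exp (-(a * s))) + K₂ * (s ^ (n + 2) * exp (-(a * s))))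
      (Ioi 0) := ((hI _).const_mul _).add ((hI _).const_mul _)
  have hpoint : ∀ s ∈ Ioi (0 : ℝ), ‖exp (-(a * s)) * (u s - B * s ^ n)‖ ≤
      K₁ * (s ^ (n + 1) * exp (-(a * s))) + K₂ * (s ^ (n + 2) * exp (-(a * s))) := by
    intro s hs
    rw [norm_mul, Real.norm_of_nonneg (exp_pos _).le, Real.norm_eq_abs]
    nlinarith [hbound s hs, exp_pos (-(a * s))]
  have hdiff : IntegrableOn (fun s => exp (-(a * s)) * (u s - B * s ^ n)) (Ioi 0) :=
    hmajor.mono' (by fun_prop) ((ae_restrict_iff' measurableSet_Ioi).2 (.of_forall hpoint))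
  have hmain : ∫ s in Ioi 0, exp (-(a * s)) * u s =
      (∫ s in Ioi 0, exp (-(a * s)) * (u s - B * s ^ n)) +
        B * ∫ s in Ioi 0, s ^ n * exp (-(a * s)) := by
    rw [← integral_const_mul, ← integral_add hdiff]
    · congr 1 with s
      ring
    · exact (hI n).const_mul B
  rw [hmain, integral_pow_mul_exp_neg_mul_Ioi n ha, mul_div_assoc, add_sub_cancel_right]
  calc |∫ s in Ioi 0, exp (-(a * s)) * (u s - B * s ^ n)|
      ≤ ∫ s in Ioi 0, K₁ * (s ^ (n + 1) * exp (-(a * s))) + K₂ * (s ^ (n + 2) * exp (-(a * s))) :=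
        norm_integral_le_of_norm_le hmajor
          ((ae_restrict_iff' measurableSet_Ioi).2 (.of_forall hpoint))
    _ = K₁ * (n + 1)! / a ^ (n + 2) + K₂ * (n + 2)! / a ^ (n + 3) := by
        rw [integral_add ((hI _).const_mul _) ((hI _).const_mul _), integral_const_mul,
          integral_const_mul, integral_pow_mul_exp_neg_mul_Ioi _ ha,
          integral_pow_mul_exp_neg_mul_Ioi _ ha]
        ring

theorem abs_exp_neg_sq_mul_sub_le (s x y : ℝ) :
    |exp (-s ^ 2) * x - y| ≤ |x - y| + |y| * s ^ 2 := by
  have h1 : exp (-s ^ 2) ≤ 1 := exp_le_one_iff.2 (by nlinarith)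
  have h2 : 1 - exp (-s ^ 2) ≤ s ^ 2 := by linarith [add_one_le_exp (-s ^ 2)]
  have h3 : 0 ≤ 1 - exp (-s ^ 2) := by linarith
  calc |exp (-s ^ 2) * x - y| = |exp (-s ^ 2) * (x - y) - (1 - exp (-s ^ 2)) * y| := by ring_nf
    _ ≤ exp (-s ^ 2) * |x - y| + (1 - exp (-s ^ 2)) * |y| := by
        refine (abs_sub _ _).trans ?_
        rw [abs_mul, abs_mul, abs_of_pos (exp_pos _), abs_of_nonneg h3]
    _ ≤ |x - y| + |y| * s ^ 2 := by
        nlinarith [abs_nonneg (x - y), abs_nonneg y]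

theorem abs_exp_neg_sq_mul_comp_sub_sub_le {g : ℝ → ℝ} {n : ℕ} {T C A s : ℝ}
    (hT : T < 0) (hC : 0 ≤ C) (hg : ContDiffOn ℝ (n + 1 : ℕ) g (Iic T))
    (hvan : ∀ j < n, iteratedDerivWithin j g (Iic T) T = 0)
    (hbound : ∀ t ≤ T, |iteratedDerivWithin (n + 1) g (Iic T) t| ≤ C * |t|)
    (hA : iteratedDerivWithin n g (Iic T) T = A) (hs : 0 < s) :
    |exp (-s ^ 2) * g (T - s) - (-1) ^ n * A / n ! * s ^ n| ≤
      C * |T| / (n + 1)! * s ^ (n + 1) +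
        (C / (n + 1)! + |(-1) ^ n * A / (n ! : ℝ)|) * s ^ (n + 2) := by
  set B : ℝ := (-1) ^ n * A / n ! with hB
  have hts : |T - s| = |T| + s := by
    rw [abs_of_neg hT, abs_of_neg (by linarith)]; ring
  have hrem := abs_sub_taylor_le_of_iteratedDerivWithin_Iic_eq_zero (t := T - s)
    (M := C * |T - s|) hg hvan (by linarith) fun x hx => (hbound x hx.2).trans <|
      mul_le_mul_of_nonneg_left (by
        rw [abs_of_neg (hx.2.trans_lt hT), abs_of_neg (by linarith)]; linarith [hx.1]) hC
  rw [hA, show T - s - T = -s by ring, neg_pow, show T - (T - s) = s by ring, hts,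
    show A * ((-1) ^ n * s ^ n) / n ! = B * s ^ n by rw [hB]; ring] at hrem
  calc |exp (-s ^ 2) * g (T - s) - B * s ^ n|
      ≤ |g (T - s) - B * s ^ n| + |B * s ^ n| * s ^ 2 := abs_exp_neg_sq_mul_sub_le _ _ _
    _ ≤ C * (|T| + s) * s ^ (n + 1) / (n + 1)! + |B| * s ^ n * s ^ 2 := by
      rw [abs_mul, abs_of_pos (pow_pos hs n)]
      linarith
    _ = _ := by ring

theorem abs_integral_Iic_exp_neg_sq_mul_div_sub_one_le {g : ℝ → ℝ} {n : ℕ} {T C A : ℝ}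
    (hT : T < 0) (hC : 0 ≤ C) (hg : ContDiffOn ℝ (n + 1 : ℕ) g (Iic T))
    (hvan : ∀ j < n, iteratedDerivWithin j g (Iic T) T = 0)
    (hbound : ∀ t ≤ T, |iteratedDerivWithin (n + 1) g (Iic T) t| ≤ C * |t|)
    (hA : iteratedDerivWithin n g (Iic T) T = A) (hA₀ : A ≠ 0) :
    |(∫ t in Iic T, exp (-t ^ 2) * g t) / (-exp (-T ^ 2) * A / (2 * T) ^ (n + 1)) - 1| ≤
      C / 2 * |A|⁻¹ + (n + 2) * (C * |A|⁻¹ + n + 1) / (2 * T) ^ 2 := by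
  set a := -2 * T with ha_def
  have ha : 0 < a := by linarith
  set B : ℝ := (-1) ^ n * A / n ! with hB
  have hX : ∫ t in Iic T, exp (-t ^ 2) * g t =
      exp (-T ^ 2) * ∫ s in Ioi 0, exp (-(a * s)) * (exp (-s ^ 2) * g (T - s)) := by
    rw [integral_Iic_eq_integral_Ioi_comp_sub, ← integral_const_mul]
    congr 1 with s
    rw [← mul_assoc, ← mul_assoc, ← exp_add, ← exp_add, ha_def]
    ring_nf
  have hY : -exp (-T ^ 2) * A / (2 * T) ^ (n + 1) = exp (-T ^ 2) * (B * n ! / a ^ (n + 1)) := by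
    rw [show 2 * T = -a by rw [ha_def]; ring, neg_pow, hB, pow_succ]
    field_simp
    rw [pow_succ, mul_right_comm, ← mul_pow]
    norm_num
  have hmeas : AEStronglyMeasurable (fun s => exp (-s ^ 2) * g (T - s))
      (volume.restrict (Ioi 0)) := by
    refine ContinuousOn.aestronglyMeasurable ?_ measurableSet_Ioi
    refine (continuous_exp.comp (by fun_prop)).continuousOn.mul
      (hg.continuousOn.comp (by fun_prop) fun s hs => ?_)
    simp only [mem_Iic]
    linarith [mem_Ioi.1 hs]
  have hLap := abs_integral_exp_neg_mul_sub_le ha hmeas fun s hs =>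
    abs_exp_neg_sq_mul_comp_sub_sub_le hT hC hg hvan hbound hA hs
  rw [hX, hY, mul_div_mul_left _ _ (exp_pos _).ne']
  have hYabs : |B * n ! / a ^ (n + 1)| = |A| / a ^ (n + 1) := by
    rw [hB, div_mul_cancel₀ _ (by positivity), abs_div, abs_mul, abs_pow, abs_neg, abs_one,
      one_pow, one_mul, abs_of_pos (pow_pos ha _)]
  have hBabs : |B| = |A| / n ! := by
    rw [hB, abs_div, abs_mul, abs_pow, abs_neg, abs_one, one_pow, one_mul, Nat.abs_cast]
  have hTabs : |T| = a / 2 := by rw [abs_of_neg hT, ha_def]; ring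
  have h2T : (2 * T) ^ 2 = a ^ 2 := by rw [ha_def]; ring
  rw [div_sub_one (by rw [← abs_ne_zero, hYabs]; positivity), abs_div, hYabs,
    div_le_iff₀ (by positivity)]
  refine hLap.trans (le_of_eq ?_)
  rw [hBabs, hTabs, h2T, Nat.factorial_succ (n + 1), Nat.factorial_succ n]
  push_cast
  field_simp
  ring

theorem stmt_11 (p : ℕ) (f : ℝ → ℝ → ℝ) (C c : ℝ) (hC : 0 < C) (hc : 0 < c)
    (hreg : ∀ T : ℝ, ContDiffOn ℝ (p + 2) (f T) (Iic T))
    (hvanish : ∀ T : ℝ, ∀ j : ℕ, j ≤ p → iteratedDerivWithin j (f T) (Iic T) T = 0)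
    (hbound : ∀ T : ℝ, ∀ t : ℝ, t ≤ T →
      |iteratedDerivWithin (p + 2) (f T) (Iic T) t| ≤ C * |t|)
    (hlower : ∀ T : ℝ, c * |T| ≤ |iteratedDerivWithin (p + 1) (f T) (Iic T) T|) :
    Tendsto (fun T : ℝ =>
        (∫ t in Iic T, Real.exp (-t ^ 2) * f T t) /
          (-(Real.exp (-T ^ 2)) * iteratedDerivWithin (p + 1) (f T) (Iic T) T
            / (2 * T) ^ (p + 2)))
      atBot (nhds 1) := by
  set A := fun T => iteratedDerivWithin (p + 1) (f T) (Iic T) T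
  have hA : Tendsto (fun T => |A T|⁻¹) atBot (𝓝 0) :=
    (tendsto_atTop_mono hlower (tendsto_abs_atBot_atTop.const_mul_atTop hc)).inv_tendsto_atTop
  have h2T : Tendsto (fun T : ℝ => (2 * T) ^ 2) atBot atTop := by
    have h := (tendsto_id (x := (atBot : Filter ℝ))).const_mul_atBot (two_pos : (0 : ℝ) < 2)
    simpa only [sq, id] using h.atBot_mul_atBot₀ h
  have hE : Tendsto (fun T => C / 2 * |A T|⁻¹ +
      ((p + 1 : ℕ) + 2) * (C * |A T|⁻¹ + (p + 1 : ℕ) + 1) / (2 * T) ^ 2) atBot (𝓝 0) := by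
    simpa using (hA.const_mul _).add ((((hA.const_mul C).add_const _).add_const 1).const_mul
      _ |>.div_atTop h2T)
  rw [tendsto_iff_norm_sub_tendsto_zero]
  refine squeeze_zero' (.of_forall fun _ => norm_nonneg _) ?_ hE
  filter_upwards [eventually_lt_atBot 0] with T hT
  rw [Real.norm_eq_abs]
  have hreg' : ContDiffOn ℝ (p + 1 + 1 : ℕ) (f T) (Iic T) := by
    convert hreg T using 1
    push_cast
    ring
  exact abs_integral_Iic_exp_neg_sq_mul_div_sub_one_le hT hC.le hreg'
    (fun j hj => hvanish T j (Nat.lt_succ_iff.1 hj)) (hbound T) rfl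
    (abs_pos.1 ((mul_pos hc (abs_pos.2 hT.ne)).trans_le (hlower T)))
end

section
/- Let μ : ℝ → ℝ and suppose μ(k) ∼ −C k^{q} e^{−(k−a)²/b} as k → +∞ with constants C > 0, b > 0, a ∈ ℝ, q ∈ ℝ. Define E(k) := Λ + μ(k) for a constant Λ. Then for each sufficiently small δ > 0 any solution k(δ) of E(k) = Λ − δ with k(δ) → +∞ as δ → 0 satisfies k(δ) = √(b |log δ|) + o(√|log δ|) as δ → 0⁺. -/
/-!
Taking logarithms in `δ = -μ(k) ∼ C k^q e^{-(k-a)²/b}` gives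
`log δ = log C + q log k - (k - a)²/b + o(1)`, so `|log δ| / k² → 1/b` along the solution
branch `k = k(δ) → ∞`. Taking square roots, `k / √|log δ| → √b`, which is the claim since
`(k - √(b |log δ|)) / √|log δ| = k / √|log δ| - √b`.
-/

open Filter Set Topology Real

theorem tendsto_log_div_of_tendsto_div_one {α : Type*} {l : Filter α} {f g h : α → ℝ} {c : ℝ}
    (hfg : Tendsto (fun x => f x / g x) l (𝓝 1)) (hh : Tendsto h l atTop)
    (hg : Tendsto (fun x => log (g x) / h x) l (𝓝 c)) :
    Tendsto (fun x => log (f x) / h x) l (𝓝 c) := by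
  have hlog_ratio : Tendsto (fun x => log (f x / g x) / h x) l (𝓝 0) := by
    have := (continuousAt_log one_ne_zero).tendsto.comp hfg
    rw [log_one] at this
    exact this.div_atTop hh
  refine (zero_add c ▸ hlog_ratio.add hg).congr' ?_
  filter_upwards [hfg.eventually_ne one_ne_zero] with x hx
  obtain ⟨hf, hg⟩ := div_ne_zero_iff.mp hx
  rw [log_div hf hg, ← add_div, sub_add_cancel]

theorem tendsto_log_gaussian_div_sq {C : ℝ} (hC : C ≠ 0) (q a b : ℝ) :
    Tendsto (fun k : ℝ => log (C * k ^ q * exp (-(k - a) ^ 2 / b)) / k ^ 2) atTop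
      (𝓝 (-b⁻¹)) := by
  have hsq : Tendsto (fun k : ℝ => k ^ 2) atTop atTop := tendsto_pow_atTop two_ne_zero
  have hconst : Tendsto (fun k : ℝ => log C / k ^ 2) atTop (𝓝 0) :=
    tendsto_const_nhds.div_atTop hsq
  have hlog : Tendsto (fun k : ℝ => q * (log k / k / k)) atTop (𝓝 0) := by
    simpa using (isLittleO_log_id_atTop.tendsto_div_nhds_zero.div_atTop tendsto_id).const_mul q
  have hquad : Tendsto (fun k : ℝ => (1 - a / k) ^ 2 / b) atTop (𝓝 b⁻¹) := by
    simpa using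
      (((tendsto_const_nhds (x := (1 : ℝ))).sub
        ((tendsto_const_nhds (x := a)).div_atTop tendsto_id)).pow 2).div_const b
  have hsum := (hconst.add hlog).sub hquad
  rw [add_zero, zero_sub] at hsum
  refine hsum.congr' ?_
  filter_upwards [eventually_gt_atTop 0] with k hk
  rw [log_mul (by positivity) (exp_pos _).ne', log_mul hC (rpow_pos_of_pos hk q).ne',
    log_rpow hk, log_exp]
  field_simp
  ring

theorem tendsto_div_sqrt_of_tendsto_div_sq {α : Type*} {l : Filter α} {g L : α → ℝ} {b : ℝ}
    (hb : 0 < b) (hL : Tendsto (fun x => L x / g x ^ 2) l (𝓝 b⁻¹)) (hg : ∀ᶠ x in l, 0 ≤ g x) :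
    Tendsto (fun x => g x / √(L x)) l (𝓝 √b) := by
  have := ((continuous_sqrt.tendsto _).comp hL).inv₀ (by positivity : √b⁻¹ ≠ 0)
  rw [sqrt_inv, inv_inv] at this
  refine this.congr' ?_
  filter_upwards [hg] with x hx
  rw [Function.comp_apply, sqrt_div' _ (sq_nonneg _), sqrt_sq hx, inv_div]

theorem stmt_13 (μ : ℝ → ℝ) (C b a q Λ δ₀ : ℝ) (hC : 0 < C) (hb : 0 < b) (hδ₀ : 0 < δ₀)
    (hμ : Tendsto (fun k : ℝ => μ k / (-C * k ^ q * Real.exp (-(k - a) ^ 2 / b)))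
      atTop (nhds 1))
    (kf : ℝ → ℝ)
    (hsol : ∀ δ : ℝ, δ ∈ Ioo 0 δ₀ → Λ + μ (kf δ) = Λ - δ)
    (hkf : Tendsto kf (nhdsWithin 0 (Ioi 0)) atTop) :
    Tendsto (fun δ : ℝ =>
        (kf δ - Real.sqrt (b * |Real.log δ|)) / Real.sqrt |Real.log δ|)
      (nhdsWithin 0 (Ioi 0)) (nhds 0) := by
  have hratio : Tendsto (fun δ => δ / (C * kf δ ^ q * exp (-(kf δ - a) ^ 2 / b)))
      (𝓝[>] 0) (𝓝 1) := by
    refine (hμ.comp hkf).congr' ?_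
    filter_upwards [Ioo_mem_nhdsGT hδ₀] with δ hδ
    rw [Function.comp_apply, show μ (kf δ) = -δ by linarith [hsol δ hδ], neg_mul, neg_mul,
      div_neg, neg_div, neg_neg]
  have hlog : Tendsto (fun δ => |log δ| / kf δ ^ 2) (𝓝[>] 0) (𝓝 b⁻¹) := by
    have := tendsto_log_div_of_tendsto_div_one hratio
      ((tendsto_pow_atTop two_ne_zero).comp hkf)
      ((tendsto_log_gaussian_div_sq hC.ne' q a b).comp hkf)
    refine (neg_neg b⁻¹ ▸ this.neg).congr' ?_
    filter_upwards [Ioo_mem_nhdsGT one_pos] with δ hδ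
    rw [abs_of_neg (log_neg hδ.1 hδ.2), neg_div, Function.comp_apply]
  have hk := tendsto_div_sqrt_of_tendsto_div_sq hb hlog (hkf.eventually_ge_atTop 0)
  refine (sub_self √b ▸ hk.sub_const √b).congr' ?_
  filter_upwards [Ioo_mem_nhdsGT one_pos] with δ hδ
  have : √|log δ| ≠ 0 := by
    simpa [sqrt_eq_zero', abs_nonpos_iff] using log_neg hδ.1 hδ.2 |>.ne
  rw [sqrt_mul hb.le]
  field_simp
end
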